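/- arXiv:0903.4581 — 5 statements merged into one kernel-verified Lean document; each statement's English description precedes it below -/
import Mathlib

section
/- Let ρ be an admissible function on a metric space X with constants C₃, k₀. Then there exists a constant C > 0 such that for all x, y ∈ X, C⁻¹ [ρ(x) + d(x,y)] ≤ ρ(y) + d(x,y) ≤ C [ρ(x) + d(x,y)]. -/
/-! Bounding `ρ x` by `ρ x + d(x, y)` in the admissibility inequality, the two exponents add up to
one, so `ρ y ≤ C₃ (ρ x + d(x, y))`; adding `d(x, y)` gives one direction with `C = C₃ + 1`, and
exchanging `x` and `y` the other. -/

lemma Real.rpow_mul_rpow_le_of_add_eq_one {a b p q : ℝ} (ha : 0 ≤ a) (hab : a ≤ b) (hp : 0 ≤ p)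
    (hpq : p + q = 1) : a ^ p * b ^ q ≤ b :=
  calc a ^ p * b ^ q ≤ b ^ p * b ^ q :=
        mul_le_mul_of_nonneg_right (Real.rpow_le_rpow ha hab hp) (Real.rpow_nonneg (ha.trans hab) q)
    _ = b := by rw [← Real.rpow_add' (ha.trans hab) (by rw [hpq]; exact one_ne_zero), hpq,
        Real.rpow_one]

lemma le_mul_add_dist_of_admissible {X : Type*} [PseudoMetricSpace X] {ρ : X → ℝ} {C₃ k₀ : ℝ}
    (hρ : ∀ x, 0 ≤ ρ x) (hC₃ : 0 ≤ C₃) (hk₀ : 0 < 1 + k₀)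
    (hadm : ∀ x y : X,
      ρ y ≤ C₃ * ρ x ^ (1 / (1 + k₀)) * (ρ x + dist x y) ^ (k₀ / (1 + k₀)))
    (x y : X) : ρ y ≤ C₃ * (ρ x + dist x y) := by
  have hexp : 1 / (1 + k₀) + k₀ / (1 + k₀) = 1 := by field_simp
  calc ρ y ≤ C₃ * ρ x ^ (1 / (1 + k₀)) * (ρ x + dist x y) ^ (k₀ / (1 + k₀)) := hadm x y
    _ = C₃ * (ρ x ^ (1 / (1 + k₀)) * (ρ x + dist x y) ^ (k₀ / (1 + k₀))) := mul_assoc ..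
    _ ≤ C₃ * (ρ x + dist x y) := by
      gcongr
      exact Real.rpow_mul_rpow_le_of_add_eq_one (hρ x) (le_add_of_nonneg_right dist_nonneg)
        (by positivity) hexp

lemma add_dist_le_mul_add_dist {X : Type*} [PseudoMetricSpace X] {ρ : X → ℝ} {K : ℝ}
    (hρ : ∀ x, 0 ≤ ρ x) (hK : ∀ x y : X, ρ y ≤ K * (ρ x + dist x y)) (x y : X) :
    ρ y + dist x y ≤ (K + 1) * (ρ x + dist x y) := by
  nlinarith [hK x y, hρ x, dist_nonneg (x := x) (y := y)]

/-- Lemma 2.1(ii): ρ(x) + d(x,y) and ρ(y) + d(x,y) are comparable. -/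
theorem admissible_add_dist_comparable {X : Type*} [MetricSpace X] (ρ : X → ℝ) (C₃ k₀ : ℝ)
    (hρ : ∀ x, 0 < ρ x) (hC₃ : 0 < C₃) (hk₀ : 0 < k₀)
    (hadm : ∀ x y : X,
      ρ y ≤ C₃ * ρ x ^ (1 / (1 + k₀)) * (ρ x + dist x y) ^ (k₀ / (1 + k₀))) :
    ∃ C > 0, ∀ x y : X,
      C⁻¹ * (ρ x + dist x y) ≤ ρ y + dist x y ∧
      ρ y + dist x y ≤ C * (ρ x + dist x y) := by
  have hρ₀ : ∀ x, 0 ≤ ρ x := fun x ↦ (hρ x).le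
  have hK := le_mul_add_dist_of_admissible hρ₀ hC₃.le (by linarith) hadm
  refine ⟨C₃ + 1, by positivity, fun x y ↦ ⟨?_, add_dist_le_mul_add_dist hρ₀ hK x y⟩⟩
  rw [inv_mul_le_iff₀ (by positivity)]
  simpa only [dist_comm y x] using add_dist_le_mul_add_dist hρ₀ hK y x
end

section
/- Let ρ be an admissible function on a metric space X with constants C₃, k₀. Then there exists a positive constant C₄ such that for all x, y ∈ X, ρ(y) ≥ C₄ [ρ(x)]^{1+k₀} [ρ(x) + d(x,y)]^{−k₀}. -/
open Metric

/-
Swap the roles of `x` and `y` in the admissibility inequality. Since `ρ x ≤ ρ x + d(x, y)`, the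
inequality itself gives `ρ y ≤ C₃ (ρ x + d(x, y))`, hence `ρ y + d(x, y) ≤ (C₃ + 1)(ρ x + d(x, y))`.
So `ρ x ≤ K ρ(y)^{1/(1+k₀)} (ρ x + d(x, y))^{k₀/(1+k₀)}` with `K = C₃ (C₃ + 1)^{k₀/(1+k₀)}`, and
raising to the power `1 + k₀` gives the claim with `C₄ = K^{-(1+k₀)}`.
-/

namespace Real

theorem rpow_mul_rpow_le_of_le {a b s t : ℝ} (ha : 0 ≤ a) (hab : a ≤ b) (hs : 0 ≤ s)
    (hst : s + t = 1) : a ^ s * b ^ t ≤ b := by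
  have hb : 0 ≤ b := ha.trans hab
  calc a ^ s * b ^ t ≤ b ^ s * b ^ t := by gcongr
    _ = b := by rw [← rpow_add' hb (by rw [hst]; exact one_ne_zero), hst, rpow_one]

theorem mul_rpow_mul_rpow_le_of_le_mul_rpow_mul_rpow {a b c K k : ℝ} (ha : 0 ≤ a) (hb : 0 < b)
    (hc : 0 ≤ c) (hK : 0 < K) (hk : 0 < 1 + k)
    (h : a ≤ K * c ^ (1 / (1 + k)) * b ^ (k / (1 + k))) :
    K ^ (-(1 + k)) * a ^ (1 + k) * b ^ (-k) ≤ c := by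
  have hpow : a ^ (1 + k) ≤ K ^ (1 + k) * c * b ^ k := by
    calc a ^ (1 + k) ≤ (K * c ^ (1 / (1 + k)) * b ^ (k / (1 + k))) ^ (1 + k) := by gcongr
      _ = K ^ (1 + k) * c * b ^ k := by
        rw [mul_rpow (by positivity) (by positivity), mul_rpow hK.le (by positivity),
          ← rpow_mul hc, ← rpow_mul hb.le, one_div_mul_cancel hk.ne',
          div_mul_cancel₀ _ hk.ne', rpow_one]
  have hKk : 0 < K ^ (1 + k) := by positivity
  have hbk : 0 < b ^ k := by positivity
  rw [rpow_neg hK.le, rpow_neg hb.le]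
  calc (K ^ (1 + k))⁻¹ * a ^ (1 + k) * (b ^ k)⁻¹
      ≤ (K ^ (1 + k))⁻¹ * (K ^ (1 + k) * c * b ^ k) * (b ^ k)⁻¹ := by gcongr
    _ = c := by field_simp

end Real

def Admissible {X : Type*} [MetricSpace X] (ρ : X → ℝ) (C k : ℝ) : Prop :=
  ∀ x y : X, ρ y ≤ C * ρ x ^ (1 / (1 + k)) * (ρ x + dist x y) ^ (k / (1 + k))

namespace Admissible

variable {X : Type*} [MetricSpace X] {ρ : X → ℝ} {C k : ℝ}

theorem le_mul_add_dist (hadm : Admissible ρ C k) (hρ : ∀ x, 0 ≤ ρ x) (hC : 0 ≤ C)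
    (hk : 0 ≤ k) (x y : X) : ρ y ≤ C * (ρ x + dist x y) := by
  have hk1 : 0 < 1 + k := by linarith
  calc ρ y ≤ C * (ρ x ^ (1 / (1 + k)) * (ρ x + dist x y) ^ (k / (1 + k))) := by
        rw [← mul_assoc]; exact hadm x y
    _ ≤ C * (ρ x + dist x y) := by
        gcongr
        exact Real.rpow_mul_rpow_le_of_le (hρ x) (le_add_of_nonneg_right dist_nonneg)
          (by positivity) (by field_simp)

theorem le_mul_rpow_mul_rpow (hadm : Admissible ρ C k) (hρ : ∀ x, 0 ≤ ρ x) (hC : 0 ≤ C)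
    (hk : 0 ≤ k) (x y : X) :
    ρ x ≤ C * (C + 1) ^ (k / (1 + k)) * ρ y ^ (1 / (1 + k)) * (ρ x + dist x y) ^ (k / (1 + k)) := by
  have hsum : ρ y + dist y x ≤ (C + 1) * (ρ x + dist x y) := by
    have := hadm.le_mul_add_dist hρ hC hk x y
    rw [dist_comm]
    nlinarith [hρ x]
  have hy := hρ y
  calc ρ x ≤ C * ρ y ^ (1 / (1 + k)) * (ρ y + dist y x) ^ (k / (1 + k)) := hadm y x
    _ ≤ C * ρ y ^ (1 / (1 + k)) * ((C + 1) * (ρ x + dist x y)) ^ (k / (1 + k)) := by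
        gcongr
    _ = C * (C + 1) ^ (k / (1 + k)) * ρ y ^ (1 / (1 + k)) * (ρ x + dist x y) ^ (k / (1 + k)) := by
        rw [Real.mul_rpow (by linarith) (add_nonneg (hρ x) dist_nonneg)]
        ring

end Admissible

/-- Lemma 2.1(iii): lower bound for ρ(y) in terms of ρ(x) and d(x,y). -/
theorem admissible_lower_bound {X : Type*} [MetricSpace X] (ρ : X → ℝ) (C₃ k₀ : ℝ)
    (hρ : ∀ x, 0 < ρ x) (hC₃ : 0 < C₃) (hk₀ : 0 < k₀)
    (hadm : ∀ x y : X,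
      ρ y ≤ C₃ * ρ x ^ (1 / (1 + k₀)) * (ρ x + dist x y) ^ (k₀ / (1 + k₀))) :
    ∃ C₄ > 0, ∀ x y : X,
      C₄ * ρ x ^ (1 + k₀) * (ρ x + dist x y) ^ (-k₀) ≤ ρ y := by
  have hadm : Admissible ρ C₃ k₀ := hadm
  have hρ' : ∀ x, 0 ≤ ρ x := fun x => (hρ x).le
  set K := C₃ * (C₃ + 1) ^ (k₀ / (1 + k₀))
  have hK : 0 < K := by positivity
  refine ⟨K ^ (-(1 + k₀)), by positivity, fun x y => ?_⟩
  exact Real.mul_rpow_mul_rpow_le_of_le_mul_rpow_mul_rpow (hρ' x)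
    (add_pos_of_pos_of_nonneg (hρ x) dist_nonneg) (hρ' y) hK (by linarith)
    (hadm.le_mul_rpow_mul_rpow hρ' hC₃.le hk₀.le x y)
end

section
/- Let ρ be an admissible function on a metric space X with constants C₃, k₀, and for each integer m let X_m = {x ∈ X : 2^{−(m+1)/2} < ρ(x)/8 ≤ 2^{−m/2}}. Then there exists a positive constant C₅ such that for all R ≥ 2 and all integers m, m', if x ∈ X_m and X_{m'} ∩ B(x, 2^{−m/2} R) ≠ ∅, then |m' − m| ≤ C₅ log R. -/
/-!
Taking logarithms, admissibility says that `(1 + k₀) log ρ` is controlled by `log ρ` and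
`log (ρ + d)` at a nearby point, so on a ball of radius `t ρ(x)` around `x` the function `log ρ`
oscillates by at most `(1 + k₀) (log⁺ C₃ + log (1 + t))`. Membership in `X_m` pins
`log ρ - log 8` to an interval of length `log 2 / 2` ending at `-(m/2) log 2`, and the radius
`2^{-m/2} R` is at most `R ρ(x)`; hence `|m' - m| log 2 ≲ 1 + log R`, and the constant is
absorbed using `log R ≥ log 2`.
-/

open Metric Real

/-- `InDyadicLevel m (ρ x)` says `x ∈ X_m`. -/
def InDyadicLevel (m : ℤ) (r : ℝ) : Prop :=
  (2 : ℝ) ^ (-((m : ℝ) + 1) / 2) < r / 8 ∧ r / 8 ≤ (2 : ℝ) ^ (-(m : ℝ) / 2)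

namespace InDyadicLevel

variable {m m' : ℤ} {r s : ℝ}

theorem log_bounds (h : InDyadicLevel m r) (hr : 0 < r) :
    -((m : ℝ) + 1) / 2 * log 2 < log r - log 8 ∧ log r - log 8 ≤ -(m : ℝ) / 2 * log 2 := by
  have hlog : log (r / 8) = log r - log 8 := log_div hr.ne' (by norm_num)
  constructor
  · simpa [hlog, log_rpow two_pos] using log_lt_log (by positivity) h.1
  · simpa [hlog, log_rpow two_pos] using log_le_log (by positivity) h.2

theorem rpow_lt (h : InDyadicLevel m r) (hr : 0 < r) : (2 : ℝ) ^ (-(m : ℝ) / 2) < r := by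
  rw [← log_lt_log_iff (by positivity) hr, log_rpow two_pos]
  have hlog8 : log 8 = 3 * log 2 := by
    rw [show (8 : ℝ) = 2 ^ 3 by norm_num, log_pow]; norm_num
  linarith [(h.log_bounds hr).1, log_pos one_lt_two]

theorem abs_sub_mul_log_two_le (h : InDyadicLevel m r) (h' : InDyadicLevel m' s)
    (hr : 0 < r) (hs : 0 < s) :
    |(m' : ℝ) - m| * log 2 ≤ 2 * |log r - log s| + log 2 := by
  obtain ⟨hr₁, hr₂⟩ := h.log_bounds hr
  obtain ⟨hs₁, hs₂⟩ := h'.log_bounds hs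
  have := neg_abs_le (log r - log s)
  have := le_abs_self (log r - log s)
  rcases abs_cases ((m' : ℝ) - m) with ⟨hn, -⟩ | ⟨hn, -⟩ <;> rw [hn] <;> linarith

end InDyadicLevel

def IsAdmissible {X : Type*} [PseudoMetricSpace X] (ρ : X → ℝ) (C₃ k₀ : ℝ) : Prop :=
  ∀ x y : X, ρ y ≤ C₃ * ρ x ^ (1 / (1 + k₀)) * (ρ x + dist x y) ^ (k₀ / (1 + k₀))

theorem log_add_le_log_add_log_one_add {a r d t : ℝ} (hr : 0 < r) (hra : r ≤ a) (hd₀ : 0 ≤ d)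
    (ht : 0 ≤ t) (hd : d ≤ t * a) : log (r + d) ≤ log a + log (1 + t) := by
  rw [← log_mul (by linarith) (by linarith)]
  exact log_le_log (by linarith) (by linarith)

namespace IsAdmissible

variable {X : Type*} [PseudoMetricSpace X] {ρ : X → ℝ} {C₃ k₀ : ℝ}

theorem one_add_mul_log_le (hadm : IsAdmissible ρ C₃ k₀) (hC₃ : 0 < C₃) (hk₀ : 0 < 1 + k₀)
    {x y : X} (hx : 0 < ρ x) (hy : 0 < ρ y) :
    (1 + k₀) * log (ρ y) ≤ (1 + k₀) * log C₃ + log (ρ x) + k₀ * log (ρ x + dist x y) := by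
  have hxd : 0 < ρ x + dist x y := by positivity
  have h := log_le_log hy (hadm x y)
  rw [log_mul (by positivity) (by positivity), log_mul hC₃.ne' (by positivity),
    log_rpow hx, log_rpow hxd] at h
  have hexp : (1 + k₀) * (log C₃ + 1 / (1 + k₀) * log (ρ x) +
      k₀ / (1 + k₀) * log (ρ x + dist x y)) =
      (1 + k₀) * log C₃ + log (ρ x) + k₀ * log (ρ x + dist x y) := by
    field_simp
  linarith [mul_le_mul_of_nonneg_left h hk₀.le]

theorem log_sub_log_le (hadm : IsAdmissible ρ C₃ k₀) (hρ : ∀ x, 0 < ρ x) (hC₃ : 0 < C₃)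
    (hk₀ : 0 ≤ k₀) {x y : X} {t : ℝ} (ht : 0 ≤ t) (hd : dist x y ≤ t * ρ x) :
    log (ρ y) - log (ρ x) ≤ log C₃ + log (1 + t) := by
  have hup := hadm.one_add_mul_log_le hC₃ (by linarith) (hρ x) (hρ y)
  have hball := mul_le_mul_of_nonneg_left
    (log_add_le_log_add_log_one_add (hρ x) le_rfl dist_nonneg ht hd) hk₀
  have ht₀ : 0 ≤ log (1 + t) := log_nonneg (by linarith)
  refine le_of_mul_le_mul_left ?_ (by linarith : (0 : ℝ) < 1 + k₀)
  nlinarith [mul_nonneg hk₀ ht₀]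

theorem log_sub_log_le_of_le (hadm : IsAdmissible ρ C₃ k₀) (hρ : ∀ x, 0 < ρ x) (hC₃ : 0 < C₃)
    (hk₀ : 0 ≤ k₀) {x y : X} {t : ℝ} (ht : 0 ≤ t) (hd : dist x y ≤ t * ρ x) (hyx : ρ y ≤ ρ x) :
    log (ρ x) - log (ρ y) ≤ (1 + k₀) * log C₃ + k₀ * log (1 + t) := by
  have hlow := hadm.one_add_mul_log_le hC₃ (by linarith) (hρ y) (hρ x)
  have hball := mul_le_mul_of_nonneg_left
    (log_add_le_log_add_log_one_add (hρ y) hyx dist_nonneg ht (dist_comm y x ▸ hd)) hk₀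
  linarith

theorem abs_log_sub_le (hadm : IsAdmissible ρ C₃ k₀) (hρ : ∀ x, 0 < ρ x) (hC₃ : 0 < C₃)
    (hk₀ : 0 ≤ k₀) {x y : X} {t : ℝ} (ht : 0 ≤ t) (hd : dist x y ≤ t * ρ x) :
    |log (ρ x) - log (ρ y)| ≤ (1 + k₀) * (log (max C₃ 1) + log (1 + t)) := by
  have hC : log C₃ ≤ log (max C₃ 1) := log_le_log hC₃ (le_max_left _ _)
  have hC₀ : 0 ≤ log (max C₃ 1) := log_nonneg (le_max_right _ _)
  have ht₀ : 0 ≤ log (1 + t) := log_nonneg (by linarith)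
  have hk₀C := mul_le_mul_of_nonneg_left hC (by linarith : (0 : ℝ) ≤ 1 + k₀)
  have hk₀t := mul_nonneg hk₀ (add_nonneg hC₀ ht₀)
  rw [abs_le, neg_le, neg_sub]
  constructor
  · linarith [hadm.log_sub_log_le hρ hC₃ hk₀ ht hd]
  · rcases le_or_gt (ρ y) (ρ x) with hyx | hxy
    · linarith [hadm.log_sub_log_le_of_le hρ hC₃ hk₀ ht hd hyx]
    · linarith [log_lt_log (hρ x) hxy]

end IsAdmissible

theorem log_one_add_le_two_mul_log {R : ℝ} (hR : 2 ≤ R) : log (1 + R) ≤ 2 * log R := by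
  calc log (1 + R) ≤ log (R ^ 2) := log_le_log (by linarith) (by nlinarith)
    _ = 2 * log R := by rw [log_pow]; norm_num

theorem le_mul_of_mul_le_add_mul {u a ℓ A B : ℝ} (ha : 0 < a) (haℓ : a ≤ ℓ) (hA : 0 ≤ A)
    (h : u * a ≤ A + B * ℓ) : u ≤ (A / a + B) / a * ℓ := by
  have hA' : A ≤ A / a * ℓ := by
    rw [div_mul_eq_mul_div, le_div_iff₀ ha]; exact mul_le_mul_of_nonneg_left haℓ hA
  rw [div_mul_eq_mul_div, le_div_iff₀ ha]
  linarith

/-- Lemma 2.2: if x ∈ X_m and X_{m'} meets B(x, 2^{-m/2} R), then |m' - m| ≲ log R. -/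
theorem admissible_level_sets_log {X : Type*} [MetricSpace X] (ρ : X → ℝ) (C₃ k₀ : ℝ)
    (hρ : ∀ x, 0 < ρ x) (hC₃ : 0 < C₃) (hk₀ : 0 < k₀)
    (hadm : ∀ x y : X,
      ρ y ≤ C₃ * ρ x ^ (1 / (1 + k₀)) * (ρ x + dist x y) ^ (k₀ / (1 + k₀))) :
    ∃ C₅ > 0, ∀ R : ℝ, 2 ≤ R → ∀ m m' : ℤ, ∀ x : X,
      ((2 : ℝ) ^ (-((m : ℝ) + 1) / 2) < ρ x / 8 ∧ ρ x / 8 ≤ (2 : ℝ) ^ (-(m : ℝ) / 2)) →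
      (∃ y : X,
        ((2 : ℝ) ^ (-((m' : ℝ) + 1) / 2) < ρ y / 8 ∧ ρ y / 8 ≤ (2 : ℝ) ^ (-(m' : ℝ) / 2)) ∧
        y ∈ ball x ((2 : ℝ) ^ (-(m : ℝ) / 2) * R)) →
      |(m' : ℝ) - (m : ℝ)| ≤ C₅ * Real.log R := by
  have hlog2 : 0 < log 2 := log_pos one_lt_two
  have hC₀ : 0 ≤ log (max C₃ 1) := log_nonneg (le_max_right _ _)
  refine ⟨((2 * (1 + k₀) * log (max C₃ 1) + log 2) / log 2 + 4 * (1 + k₀)) / log 2,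
    by positivity, ?_⟩
  rintro R hR m m' x hx ⟨y, hy, hyx⟩
  have hd : dist x y ≤ R * ρ x := by
    rw [mem_ball, dist_comm] at hyx
    linarith [mul_lt_mul_of_pos_right (InDyadicLevel.rpow_lt hx (hρ x)) (by linarith : 0 < R)]
  have hΔ := IsAdmissible.abs_log_sub_le hadm hρ hC₃ hk₀.le (by linarith) hd
  have hlev := InDyadicLevel.abs_sub_mul_log_two_le hx hy (hρ x) (hρ y)
  have hR₁ := log_one_add_le_two_mul_log hR
  have hR₂ := mul_le_mul_of_nonneg_left hR₁ (by linarith : (0 : ℝ) ≤ 1 + k₀)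
  apply le_mul_of_mul_le_add_mul hlog2 (log_le_log two_pos hR) (by positivity)
  linarith
end

section
/- Let ρ be an admissible function with constants C₃, k₀, let C' > 0, and suppose 2^{−k} ≥ ρ(x). Then there exists a constant C̃₀ ≥ 1 (depending only on C', C₃, k₀ and any fixed C̃) such that: if d(x,u) ≥ C̃₀ 2^{−k} and d(u,z) < C' ρ(u), then d(x,z) ≥ d(x,u)/2 ≥ (C̃₀/2) 2^{−k}. -/
/-!
Write `a = 1/(1+k₀)`, `b = k₀/(1+k₀)`, so `a + b = 1`. If `ρ x ≤ d(x,u)/C₀` then admissibility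
gives `ρ u ≤ C₃ (d/C₀)^a (2d)^b ≤ 2 C₃ d / C₀^a`, where `d = d(x,u)`. Choosing `C₀` with
`C₀^a ≥ 4 C₃ C'` makes every `z` with `d(u,z) < C' ρ u` lie within `d(x,u)/2` of `u`, and the
triangle inequality finishes.
-/

theorem half_dist_le_dist_of_dist_le_half {X : Type*} [PseudoMetricSpace X] {x u z : X}
    (h : dist u z ≤ dist x u / 2) : dist x u / 2 ≤ dist x z := by
  linarith [dist_triangle x z u, dist_comm z u]

theorem rpow_mul_add_rpow_le {a b r D C : ℝ} (ha : 0 ≤ a) (hb : 0 ≤ b) (hab : a + b = 1)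
    (hr : 0 ≤ r) (hC : 1 ≤ C) (hrD : r ≤ D / C) : r ^ a * (r + D) ^ b ≤ 2 * D / C ^ a := by
  have hC₀ : 0 < C := by linarith
  have hD : 0 ≤ D := by simpa using (le_div_iff₀ hC₀).mp (hr.trans hrD)
  have hrD' : r + D ≤ 2 * D := by linarith [div_le_self hD hC]
  have h2b : (2 : ℝ) ^ b ≤ 2 := by
    simpa using Real.rpow_le_rpow_of_exponent_le one_le_two (show b ≤ 1 by linarith)
  calc r ^ a * (r + D) ^ b ≤ (D / C) ^ a * (2 * D) ^ b := by gcongr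
    _ = 2 ^ b * D ^ (a + b) / C ^ a := by
      rw [Real.div_rpow hD hC₀.le, Real.mul_rpow zero_le_two hD, Real.rpow_add' hD (by simp [hab])]
      ring
    _ ≤ 2 * D / C ^ a := by rw [hab, Real.rpow_one]; gcongr

/-- The claim in the proof of Theorem 3.1: if 2^{-k} ≥ ρ(x), d(x,u) ≥ C̃₀ 2^{-k} and
d(u,z) < C' ρ(u), then d(x,z) ≥ d(x,u)/2 ≥ (C̃₀/2) 2^{-k}. -/
theorem localization_separation {X : Type*} [MetricSpace X] (ρ : X → ℝ) (C₃ k₀ C' : ℝ)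
    (hρ : ∀ x, 0 < ρ x) (hC₃ : 0 < C₃) (hk₀ : 0 < k₀) (hC' : 0 < C')
    (hadm : ∀ x y : X,
      ρ y ≤ C₃ * ρ x ^ (1 / (1 + k₀)) * (ρ x + dist x y) ^ (k₀ / (1 + k₀))) :
    ∃ C₀ : ℝ, 1 ≤ C₀ ∧ ∀ (x : X) (k : ℤ), ρ x ≤ (2 : ℝ) ^ (-k) →
      ∀ u z : X, C₀ * (2 : ℝ) ^ (-k) ≤ dist x u → dist u z < C' * ρ u →
        dist x u / 2 ≤ dist x z ∧ (C₀ / 2) * (2 : ℝ) ^ (-k) ≤ dist x u / 2 := by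
  have hk : 0 < 1 + k₀ := by linarith
  have hab : 1 / (1 + k₀) + k₀ / (1 + k₀) = 1 := by field_simp
  set C₀ := max 1 (4 * C₃ * C') ^ (1 + k₀)
  have hC₀ : 1 ≤ C₀ := Real.one_le_rpow (le_max_left _ _) hk.le
  have hC₀a : C₀ ^ (1 / (1 + k₀)) = max 1 (4 * C₃ * C') := by
    rw [one_div, Real.rpow_rpow_inv (by positivity) hk.ne']
  refine ⟨C₀, hC₀, fun x k hx u z hdu hdz => ⟨half_dist_le_dist_of_dist_le_half ?_, by linarith⟩⟩
  have hρx : ρ x ≤ dist x u / C₀ := by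
    rw [le_div_iff₀ (by linarith), mul_comm]
    exact (mul_le_mul_of_nonneg_left hx (by linarith)).trans hdu
  have hρu : ρ u ≤ C₃ * (2 * dist x u / max 1 (4 * C₃ * C')) := by
    rw [← hC₀a]
    refine (hadm x u).trans ?_
    rw [mul_assoc]
    gcongr
    exact rpow_mul_add_rpow_le (by positivity) (by positivity) hab (hρ x).le hC₀ hρx
  calc dist u z ≤ C' * (C₃ * (2 * dist x u / max 1 (4 * C₃ * C'))) :=
        hdz.le.trans (mul_le_mul_of_nonneg_left hρu hC'.le)
    _ = 4 * C₃ * C' / max 1 (4 * C₃ * C') * (dist x u / 2) := by ring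
    _ ≤ dist x u / 2 := by
        refine mul_le_of_le_one_left (by positivity) ?_
        exact div_le_one_of_le₀ (le_max_right _ _) (by positivity)
end

section
/- Let (X,d,μ) be a doubling metric measure space, ρ admissible, and let {T_t}_{t>0} be a family of integral operators whose kernels satisfy |T_t(x,y)| ≤ C [μ(B(x,t)) + μ(B(x,d(x,y)))]⁻¹ (t/(t+d(x,y)))^{δ₂} (ρ(x)/(t+ρ(x)))^{δ₃} for some δ₂, δ₃ > 0. Then there exists C' such that for every (1,2)_ρ-atom a supported in B(y₀,r) with r < ρ(y₀), ∫_{X \ B(y₀, 4ρ(y₀))} sup_{t ≥ ρ(x)} |T_t(a)(x)| dμ(x) ≤ C'. -/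
open Metric MeasureTheory ENNReal

/-!
Write `D = d(x, y₀)` for `x` outside `B(y₀, 4ρ(y₀))`. For `y` in the support of the atom,
`d(x, y) ≥ D / 2`, so for every `t > 0` the size condition and doubling give
`|T_t(x, y)| ≲ μ(B(y₀, D))⁻¹ (ρ(x) / D)^ε` with `ε = min δ₂ δ₃`, and admissibility of `ρ`
turns `ρ(x) / D` into `(ρ(y₀) / D)^{1/(1+k₀)}`. As `‖a‖₁ ≤ 1` by Cauchy–Schwarz, the maximal
function is bounded on the dyadic annulus `D ∼ 2^j · 4ρ(y₀)` by `2^{-jβ} / μ(B(y₀, 2^j · 4ρ(y₀)))`,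
`β = ε / (1 + k₀)`; by doubling each annulus contributes `O(2^{-jβ})`, a geometric series.
-/

lemma rpow_mul_rpow_le_rpow_min {t ρ d δ₂ δ₃ : ℝ} (ht : 0 < t) (hρ : 0 ≤ ρ) (hd : 0 < d)
    (hδ₂ : 0 ≤ δ₂) (hδ₃ : 0 ≤ δ₃) :
    (t / (t + d)) ^ δ₂ * (ρ / (t + ρ)) ^ δ₃ ≤ (ρ / d) ^ min δ₂ δ₃ := by
  have hε : 0 ≤ min δ₂ δ₃ := le_min hδ₂ hδ₃
  have hs : t / (t + d) ≤ 1 := div_le_one_of_le₀ (by linarith) (by positivity)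
  have hu : ρ / (t + ρ) ≤ 1 := div_le_one_of_le₀ (by linarith) (by positivity)
  calc (t / (t + d)) ^ δ₂ * (ρ / (t + ρ)) ^ δ₃
      ≤ (t / (t + d)) ^ min δ₂ δ₃ * (ρ / (t + ρ)) ^ min δ₂ δ₃ :=
        mul_le_mul (Real.rpow_le_rpow_of_exponent_ge' (by positivity) hs hε (min_le_left _ _))
          (Real.rpow_le_rpow_of_exponent_ge' (by positivity) hu hε (min_le_right _ _))
          (by positivity) (by positivity)
    _ = (t / (t + d) * (ρ / (t + ρ))) ^ min δ₂ δ₃ := by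
        rw [Real.mul_rpow (by positivity) (by positivity)]
    _ ≤ (ρ / d) ^ min δ₂ δ₃ := by
        gcongr
        rw [div_mul_div_comm, div_le_div_iff₀ (by positivity) hd]
        nlinarith [mul_nonneg hρ (sq_nonneg t), mul_nonneg (mul_nonneg hρ ht.le) hρ,
          mul_nonneg (mul_nonneg hρ hd.le) hρ]

lemma rpow_mul_add_rpow_one_sub_le {a D α : ℝ} (ha : 0 < a) (haD : a ≤ D) (hα : 0 ≤ α) :
    a ^ α * (a + D) ^ (1 - α) ≤ 2 * D * (a / D) ^ α := by
  have hD : 0 < D := ha.trans_le haD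
  calc a ^ α * (a + D) ^ (1 - α) = (a + D) * (a / (a + D)) ^ α := by
        rw [Real.rpow_sub (by positivity), Real.rpow_one, Real.div_rpow ha.le (by positivity)]
        ring
    _ ≤ 2 * D * (a / D) ^ α := by gcongr <;> linarith

section Integration

variable {α : Type*} [MeasurableSpace α] {μ : Measure α}

lemma eLpNorm_one_le_eLpNorm_two_mul_sqrt_measure {f : α → ℝ} {s : Set α}
    (hf : AEStronglyMeasurable f μ) (hfs : Function.support f ⊆ s) :
    eLpNorm f 1 μ ≤ eLpNorm f 2 μ * μ s ^ (1 / 2 : ℝ) := by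
  rw [← eLpNorm_restrict_eq_of_support_subset hfs,
    ← eLpNorm_restrict_eq_of_support_subset (p := 2) hfs]
  convert eLpNorm_le_eLpNorm_mul_rpow_measure_univ one_le_two hf.restrict using 2
  norm_num

lemma lintegral_enorm_le_one_of_eLpNorm_two_le {f : α → ℝ} {s : Set α}
    (hs₀ : μ s ≠ 0) (hs : μ s ≠ ∞)
    (hf : AEStronglyMeasurable f μ) (hfs : Function.support f ⊆ s)
    (hnorm : eLpNorm f 2 μ ≤ μ s ^ (-(1 : ℝ) / 2)) :
    ∫⁻ x, ‖f x‖ₑ ∂μ ≤ 1 := by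
  rw [← eLpNorm_one_eq_lintegral_enorm]
  calc eLpNorm f 1 μ ≤ eLpNorm f 2 μ * μ s ^ (1 / 2 : ℝ) :=
        eLpNorm_one_le_eLpNorm_two_mul_sqrt_measure hf hfs
    _ ≤ μ s ^ (-(1 : ℝ) / 2) * μ s ^ (1 / 2 : ℝ) := by gcongr
    _ = 1 := by rw [← ENNReal.rpow_add _ _ hs₀ hs]; norm_num

lemma ofReal_abs_integral_mul_le {f g : α → ℝ} {M : ℝ} (hfg : ∀ y, g y ≠ 0 → |f y| ≤ M) :
    ENNReal.ofReal |∫ y, f y * g y ∂μ| ≤ ENNReal.ofReal M * ∫⁻ y, ‖g y‖ₑ ∂μ := by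
  rw [← Real.enorm_eq_ofReal_abs, ← lintegral_const_mul' _ _ ofReal_ne_top]
  refine (enorm_integral_le_lintegral_enorm _).trans (lintegral_mono fun y => ?_)
  by_cases hy : g y = 0
  · simp [hy]
  rw [enorm_mul, Real.enorm_eq_ofReal_abs (f y)]
  gcongr
  exact hfg y hy

end Integration

section Metric

variable {X : Type*} [MetricSpace X]

def dyadicAnnulus (y₀ : X) (R₀ : ℝ) (j : ℕ) : Set X :=
  ball y₀ (R₀ * 2 ^ (j + 1)) \ ball y₀ (R₀ * 2 ^ j)

lemma compl_ball_subset_iUnion_dyadicAnnulus (y₀ : X) {R₀ : ℝ} (hR₀ : 0 < R₀) :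
    (ball y₀ R₀)ᶜ ⊆ ⋃ j, dyadicAnnulus y₀ R₀ j := by
  intro x hx
  rw [Set.mem_compl_iff, mem_ball, not_lt] at hx
  obtain ⟨j, hj, hj'⟩ := exists_nat_pow_near ((one_le_div hR₀).2 hx) one_lt_two
  refine Set.mem_iUnion.2 ⟨j, ?_, ?_⟩
  · rw [mem_ball, mul_comm]; exact (div_lt_iff₀ hR₀).1 hj'
  · rw [mem_ball, not_lt, mul_comm]; exact (le_div_iff₀ hR₀).1 hj

lemma div_le_of_admissible {ρ : X → ℝ} {C₃ k₀ : ℝ} (hρ : ∀ x, 0 < ρ x) (hC₃ : 0 ≤ C₃)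
    (hk₀ : 0 ≤ k₀)
    (hadm : ∀ x y : X,
      ρ y ≤ C₃ * ρ x ^ (1 / (1 + k₀)) * (ρ x + dist x y) ^ (k₀ / (1 + k₀)))
    {x y₀ : X} {R d : ℝ} (hR : 4 * ρ y₀ ≤ R) (hRx : R ≤ dist x y₀) (hxd : dist x y₀ ≤ 2 * d) :
    ρ x / d ≤ 4 * C₃ * (4 * ρ y₀ / R) ^ (1 / (1 + k₀)) := by
  have hρ₀ := hρ y₀
  have hD : 0 < dist x y₀ := by linarith
  have hα : 0 ≤ 1 / (1 + k₀) := by positivity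
  have hρx : ρ x ≤ C₃ * (2 * dist x y₀ * (ρ y₀ / dist x y₀) ^ (1 / (1 + k₀))) := by
    have hexp : k₀ / (1 + k₀) = 1 - 1 / (1 + k₀) := by field_simp; ring
    calc ρ x ≤ C₃ * (ρ y₀ ^ (1 / (1 + k₀)) * (ρ y₀ + dist x y₀) ^ (1 - 1 / (1 + k₀))) := by
          rw [← hexp, ← mul_assoc, dist_comm]; exact hadm y₀ x
      _ ≤ _ := mul_le_mul_of_nonneg_left
            (rpow_mul_add_rpow_one_sub_le hρ₀ (by linarith) hα) hC₃
  calc ρ x / d ≤ ρ x / (dist x y₀ / 2) := by gcongr; exacts [(hρ x).le, by linarith]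
    _ ≤ C₃ * (2 * dist x y₀ * (ρ y₀ / dist x y₀) ^ (1 / (1 + k₀))) / (dist x y₀ / 2) := by
        gcongr
    _ = 4 * C₃ * (ρ y₀ / dist x y₀) ^ (1 / (1 + k₀)) := by field_simp; ring
    _ ≤ 4 * C₃ * (4 * ρ y₀ / R) ^ (1 / (1 + k₀)) := by
        have : ρ y₀ / dist x y₀ ≤ 4 * ρ y₀ / R := by
          rw [div_le_div_iff₀ hD (by linarith)]; nlinarith
        gcongr

variable [MeasurableSpace X] {μ : Measure X}

lemma measure_ball_le_sq_mul_of_doubling {Cd : ℝ}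
    (hCd : 0 ≤ Cd) (hfin : ∀ (x : X) (r : ℝ), 0 < r → μ (ball x r) ≠ ∞)
    (hdb : ∀ (x : X) (r : ℝ), 0 < r →
      (μ (ball x (2 * r))).toReal ≤ Cd * (μ (ball x r)).toReal)
    {x y₀ : X} {R d : ℝ} (hR : 0 < R) (hRx : R ≤ dist x y₀) (hxd : dist x y₀ ≤ 2 * d) :
    (μ (ball y₀ R)).toReal ≤ Cd ^ 2 * (μ (ball x d)).toReal := by
  set D := dist x y₀
  have hD : 0 < D := hR.trans_le hRx
  have hsub : ball y₀ R ⊆ ball x (2 * D) := fun z hz => by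
    rw [mem_ball] at hz ⊢
    linarith [dist_triangle z y₀ x, dist_comm x y₀]
  calc (μ (ball y₀ R)).toReal ≤ (μ (ball x (2 * D))).toReal :=
        toReal_mono (hfin x _ (by positivity)) (measure_mono hsub)
    _ ≤ Cd * (μ (ball x D)).toReal := hdb x D hD
    _ ≤ Cd * (μ (ball x (2 * d))).toReal := by
        gcongr
        exact hfin x _ (by linarith)
    _ ≤ Cd * (Cd * (μ (ball x d)).toReal) := by gcongr; exact hdb x d (by linarith)
    _ = Cd ^ 2 * (μ (ball x d)).toReal := by ring

lemma setLIntegral_dyadicAnnulus_le_of_decay {F : X → ℝ≥0∞} {y₀ : X} {R₀ K β Cd : ℝ}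
    (hR₀ : 0 < R₀) (hK : 0 ≤ K) (hCd : 0 ≤ Cd)
    (hfin : ∀ r, 0 < r → μ (ball y₀ r) ≠ ∞)
    (hdb : ∀ r, 0 < r → (μ (ball y₀ (2 * r))).toReal ≤ Cd * (μ (ball y₀ r)).toReal)
    (hF : ∀ x R, R₀ ≤ R → R ≤ dist x y₀ →
      F x ≤ ENNReal.ofReal (K * (μ (ball y₀ R)).toReal⁻¹ * (R₀ / R) ^ β)) (j : ℕ) :
    ∫⁻ x in dyadicAnnulus y₀ R₀ j, F x ∂μ ≤ ENNReal.ofReal (K * Cd * (2⁻¹ ^ β) ^ j) := by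
  set Rj := R₀ * 2 ^ j
  have hRj : 0 < Rj := by positivity
  have hratio : (R₀ / Rj) ^ β = (2⁻¹ ^ β) ^ j := by
    rw [div_mul_cancel_left₀ hR₀.ne', ← inv_pow, Real.rpow_pow_comm (by norm_num)]
  have hdbj : (μ (ball y₀ (R₀ * 2 ^ (j + 1)))).toReal ≤ Cd * (μ (ball y₀ Rj)).toReal := by
    rw [pow_succ, ← mul_assoc, mul_comm _ (2 : ℝ)]; exact hdb _ hRj
  calc ∫⁻ x in dyadicAnnulus y₀ R₀ j, F x ∂μ
      ≤ ∫⁻ _ in dyadicAnnulus y₀ R₀ j,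
          ENNReal.ofReal (K * (μ (ball y₀ Rj)).toReal⁻¹ * (2⁻¹ ^ β) ^ j) ∂μ := by
        refine setLIntegral_mono measurable_const fun x hx => ?_
        rw [← hratio]
        refine hF x _ (le_mul_of_one_le_right hR₀.le (one_le_pow₀ one_le_two)) ?_
        simpa using hx.2
    _ ≤ ENNReal.ofReal (K * (μ (ball y₀ Rj)).toReal⁻¹ * (2⁻¹ ^ β) ^ j) *
          μ (ball y₀ (R₀ * 2 ^ (j + 1))) := by
        rw [setLIntegral_const]; gcongr; exact Set.sdiff_subset
    _ = ENNReal.ofReal (K * (2⁻¹ ^ β) ^ j *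
          ((μ (ball y₀ Rj)).toReal⁻¹ * (μ (ball y₀ (R₀ * 2 ^ (j + 1)))).toReal)) := by
        rw [← ofReal_toReal (hfin (R₀ * 2 ^ (j + 1)) (by positivity)),
          ← ofReal_mul (by positivity), toReal_ofReal toReal_nonneg]
        ring_nf
    _ ≤ ENNReal.ofReal (K * (2⁻¹ ^ β) ^ j * Cd) := by
        gcongr
        calc _ ≤ (μ (ball y₀ Rj)).toReal⁻¹ * (Cd * (μ (ball y₀ Rj)).toReal) := by gcongr
          _ ≤ Cd := by
            rw [mul_left_comm]; exact mul_le_of_le_one_right hCd inv_mul_le_one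
    _ = ENNReal.ofReal (K * Cd * (2⁻¹ ^ β) ^ j) := by ring_nf

lemma lintegral_compl_ball_le_of_decay {F : X → ℝ≥0∞} {y₀ : X} {R₀ K β Cd : ℝ}
    (hR₀ : 0 < R₀) (hK : 0 ≤ K) (hβ : 0 < β) (hCd : 0 ≤ Cd)
    (hfin : ∀ r, 0 < r → μ (ball y₀ r) ≠ ∞)
    (hdb : ∀ r, 0 < r → (μ (ball y₀ (2 * r))).toReal ≤ Cd * (μ (ball y₀ r)).toReal)
    (hF : ∀ x R, R₀ ≤ R → R ≤ dist x y₀ →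
      F x ≤ ENNReal.ofReal (K * (μ (ball y₀ R)).toReal⁻¹ * (R₀ / R) ^ β)) :
    ∫⁻ x in (ball y₀ R₀)ᶜ, F x ∂μ ≤ ENNReal.ofReal (K * Cd / (1 - 2⁻¹ ^ β)) := by
  have hq : (2⁻¹ : ℝ) ^ β < 1 := Real.rpow_lt_one (by norm_num) (by norm_num) hβ
  calc ∫⁻ x in (ball y₀ R₀)ᶜ, F x ∂μ ≤ ∑' j, ∫⁻ x in dyadicAnnulus y₀ R₀ j, F x ∂μ :=
        (lintegral_mono_set (compl_ball_subset_iUnion_dyadicAnnulus y₀ hR₀)).trans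
          (lintegral_iUnion_le _ _)
    _ ≤ ∑' j : ℕ, ENNReal.ofReal (K * Cd * (2⁻¹ ^ β) ^ j) := ENNReal.tsum_le_tsum fun j =>
        setLIntegral_dyadicAnnulus_le_of_decay hR₀ hK hCd hfin hdb hF j
    _ = ENNReal.ofReal (K * Cd / (1 - 2⁻¹ ^ β)) := by
        rw [← ENNReal.ofReal_tsum_of_nonneg (fun j => by positivity)
            ((summable_geometric_of_lt_one (by positivity) hq).mul_left _),
          tsum_mul_left, tsum_geometric_of_lt_one (by positivity) hq, div_eq_mul_inv]

lemma abs_kernel_le_of_far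
    (hballs : ∀ (x : X) (r : ℝ), 0 < r → 0 < μ (ball x r) ∧ μ (ball x r) < ∞)
    {Cd : ℝ} (hCd : 0 ≤ Cd)
    (hdb : ∀ (x : X) (r : ℝ), 0 < r →
      (μ (ball x (2 * r))).toReal ≤ Cd * (μ (ball x r)).toReal)
    {ρ : X → ℝ} {C₃ k₀ : ℝ} (hρ : ∀ x, 0 < ρ x) (hC₃ : 0 ≤ C₃) (hk₀ : 0 ≤ k₀)
    (hadm : ∀ x y : X,
      ρ y ≤ C₃ * ρ x ^ (1 / (1 + k₀)) * (ρ x + dist x y) ^ (k₀ / (1 + k₀)))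
    {Tt : ℝ → X → X → ℝ} {CT δ₂ δ₃ : ℝ} (hCT : 0 ≤ CT) (hδ₂ : 0 ≤ δ₂) (hδ₃ : 0 ≤ δ₃)
    (hsize : ∀ (t : ℝ) (x y : X), 0 < t →
      |Tt t x y| ≤ CT * ((μ (ball x t)).toReal + (μ (ball x (dist x y))).toReal)⁻¹ *
        (t / (t + dist x y)) ^ δ₂ * (ρ x / (t + ρ x)) ^ δ₃)
    {x y y₀ : X} {R t : ℝ} (hR : 4 * ρ y₀ ≤ R) (hRx : R ≤ dist x y₀) (hy : dist y y₀ < ρ y₀)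
    (ht : 0 < t) :
    |Tt t x y| ≤ CT * Cd ^ 2 * (4 * C₃) ^ min δ₂ δ₃ * (μ (ball y₀ R)).toReal⁻¹ *
      (4 * ρ y₀ / R) ^ (1 / (1 + k₀) * min δ₂ δ₃) := by
  have hρ₀ := hρ y₀
  have hR0 : 0 < R := by linarith
  have hxy : dist x y₀ ≤ 2 * dist x y := by linarith [dist_triangle x y y₀]
  have hd : 0 < dist x y := by linarith
  have hfin : ∀ (x : X) (r : ℝ), 0 < r → μ (ball x r) ≠ ∞ := fun x r hr => (hballs x r hr).2.ne
  have hvol : ((μ (ball x t)).toReal + (μ (ball x (dist x y))).toReal)⁻¹ ≤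
      Cd ^ 2 * (μ (ball y₀ R)).toReal⁻¹ := by
    have hpos : 0 < (μ (ball x (dist x y))).toReal :=
      toReal_pos (hballs x _ hd).1.ne' (hfin x _ hd)
    have hRpos : 0 < (μ (ball y₀ R)).toReal :=
      toReal_pos (hballs y₀ R hR0).1.ne' (hfin y₀ R hR0)
    calc _ ≤ (μ (ball x (dist x y))).toReal⁻¹ := inv_anti₀ hpos (by simp)
      _ ≤ Cd ^ 2 * (μ (ball y₀ R)).toReal⁻¹ := by
        rw [← div_eq_mul_inv, inv_eq_one_div, div_le_div_iff₀ hpos hRpos]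
        linarith [measure_ball_le_sq_mul_of_doubling hCd hfin hdb hR0 hRx hxy]
  have hdecay : (t / (t + dist x y)) ^ δ₂ * (ρ x / (t + ρ x)) ^ δ₃ ≤
      (4 * C₃) ^ min δ₂ δ₃ * (4 * ρ y₀ / R) ^ (1 / (1 + k₀) * min δ₂ δ₃) := by
    calc _ ≤ (ρ x / dist x y) ^ min δ₂ δ₃ :=
          rpow_mul_rpow_le_rpow_min ht (hρ x).le hd hδ₂ hδ₃
      _ ≤ (4 * C₃ * (4 * ρ y₀ / R) ^ (1 / (1 + k₀))) ^ min δ₂ δ₃ :=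
          Real.rpow_le_rpow (div_nonneg (hρ x).le hd.le)
            (div_le_of_admissible hρ hC₃ hk₀ hadm hR hRx hxy) (le_min hδ₂ hδ₃)
      _ = _ := by
          rw [Real.mul_rpow (by positivity) (by positivity), ← Real.rpow_mul (by positivity)]
  calc |Tt t x y| ≤ CT * ((μ (ball x t)).toReal + (μ (ball x (dist x y))).toReal)⁻¹ *
        ((t / (t + dist x y)) ^ δ₂ * (ρ x / (t + ρ x)) ^ δ₃) := by
        rw [← mul_assoc]; exact hsize t x y ht
    _ ≤ CT * (Cd ^ 2 * (μ (ball y₀ R)).toReal⁻¹) *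
        ((4 * C₃) ^ min δ₂ δ₃ * (4 * ρ y₀ / R) ^ (1 / (1 + k₀) * min δ₂ δ₃)) := by
        gcongr
        exact mul_nonneg (Real.rpow_nonneg (by positivity) _)
          (Real.rpow_nonneg (div_nonneg (hρ x).le (by linarith [hρ x])) _)
    _ = _ := by ring

end Metric

theorem maximal_large_time_atom_bound_general {X : Type*} [MetricSpace X]
    [MeasurableSpace X] (μ : Measure X)
    (hballs : ∀ (x : X) (r : ℝ), 0 < r → 0 < μ (ball x r) ∧ μ (ball x r) < ∞)
    (hdouble : ∃ C > 0, ∀ (x : X) (r : ℝ), 0 < r →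
      (μ (ball x (2 * r))).toReal ≤ C * (μ (ball x r)).toReal)
    (ρ : X → ℝ) (C₃ k₀ : ℝ) (hρ : ∀ x, 0 < ρ x) (hC₃ : 0 < C₃) (hk₀ : 0 < k₀)
    (hadm : ∀ x y : X,
      ρ y ≤ C₃ * ρ x ^ (1 / (1 + k₀)) * (ρ x + dist x y) ^ (k₀ / (1 + k₀)))
    (Tt : ℝ → X → X → ℝ) (CT δ₂ δ₃ : ℝ) (hCT : 0 < CT) (hδ₂ : 0 < δ₂) (hδ₃ : 0 < δ₃)
    (hsize : ∀ (t : ℝ) (x y : X), 0 < t →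
      |Tt t x y| ≤ CT * ((μ (ball x t)).toReal + (μ (ball x (dist x y))).toReal)⁻¹ *
        (t / (t + dist x y)) ^ δ₂ * (ρ x / (t + ρ x)) ^ δ₃) :
    ∃ C' > 0, ∀ (a : X → ℝ) (y₀ : X) (r : ℝ), 0 < r → r < ρ y₀ →
      MemLp a 2 μ →
      (∀ x, x ∉ ball y₀ r → a x = 0) →
      eLpNorm a 2 μ ≤ μ (ball y₀ r) ^ (-(1 : ℝ) / 2) →
      (r < ρ y₀ / 4 → ∫ x, a x ∂μ = 0) →
      ∫⁻ x in (ball y₀ (4 * ρ y₀))ᶜ,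
        ⨆ (t : ℝ) (_ : ρ x ≤ t), ENNReal.ofReal |∫ y, Tt t x y * a y ∂μ| ∂μ ≤
        ENNReal.ofReal C' := by
  obtain ⟨Cd, hCd, hdb⟩ := hdouble
  have hfin : ∀ (x : X) (r : ℝ), 0 < r → μ (ball x r) ≠ ∞ := fun x r hr => (hballs x r hr).2.ne
  have hβ : 0 < 1 / (1 + k₀) * min δ₂ δ₃ := by have := lt_min hδ₂ hδ₃; positivity
  have hq : (2⁻¹ : ℝ) ^ (1 / (1 + k₀) * min δ₂ δ₃) < 1 :=
    Real.rpow_lt_one (by norm_num) (by norm_num) hβ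
  refine ⟨CT * Cd ^ 2 * (4 * C₃) ^ min δ₂ δ₃ * Cd / (1 - 2⁻¹ ^ (1 / (1 + k₀) * min δ₂ δ₃)),
    div_pos (by positivity) (sub_pos.2 hq), ?_⟩
  intro a y₀ r hr hrρ hmem ha0 hnorm _
  have hsupp : Function.support a ⊆ ball y₀ r := fun y hy => by_contra fun h => hy (ha0 y h)
  have ha1 : ∫⁻ y, ‖a y‖ₑ ∂μ ≤ 1 := lintegral_enorm_le_one_of_eLpNorm_two_le
    (hballs y₀ r hr).1.ne' (hfin y₀ r hr) hmem.1 hsupp hnorm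
  refine lintegral_compl_ball_le_of_decay (by linarith [hρ y₀]) (by positivity) hβ hCd.le
    (hfin y₀) (hdb y₀) fun x R hR hRx => iSup₂_le fun t ht => ?_
  calc ENNReal.ofReal |∫ y, Tt t x y * a y ∂μ| ≤ ENNReal.ofReal _ * ∫⁻ y, ‖a y‖ₑ ∂μ :=
        ofReal_abs_integral_mul_le fun y hy => abs_kernel_le_of_far hballs hCd.le hdb hρ hC₃.le
          hk₀.le hadm hCT.le hδ₂.le hδ₃.le hsize hR hRx ((mem_ball.1 (hsupp hy)).trans hrρ)
          ((hρ x).trans_le ht)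
    _ ≤ _ := mul_le_of_le_one_right' ha1

/-- The tail estimate in the proof of Theorem 4.2: for kernels with ρ-localized decay,
the maximal function over large times t ≥ ρ(x) applied to a (1,2)_ρ-atom has uniformly
bounded L¹-norm outside B(y₀, 4ρ(y₀)). -/
theorem maximal_large_time_atom_bound {X : Type*} [MetricSpace X]
    [MeasurableSpace X] [BorelSpace X] (μ : Measure X)
    (hballs : ∀ (x : X) (r : ℝ), 0 < r → 0 < μ (ball x r) ∧ μ (ball x r) < ∞)
    (hdouble : ∃ C > 0, ∀ (x : X) (r : ℝ), 0 < r →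
      (μ (ball x (2 * r))).toReal ≤ C * (μ (ball x r)).toReal)
    (hinf : μ Set.univ = ∞)
    (ρ : X → ℝ) (C₃ k₀ : ℝ) (hρ : ∀ x, 0 < ρ x) (hC₃ : 0 < C₃) (hk₀ : 0 < k₀)
    (hadm : ∀ x y : X,
      ρ y ≤ C₃ * ρ x ^ (1 / (1 + k₀)) * (ρ x + dist x y) ^ (k₀ / (1 + k₀)))
    (Tt : ℝ → X → X → ℝ) (CT δ₂ δ₃ : ℝ) (hCT : 0 < CT) (hδ₂ : 0 < δ₂) (hδ₃ : 0 < δ₃)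
    (hsize : ∀ (t : ℝ) (x y : X), 0 < t →
      |Tt t x y| ≤ CT * ((μ (ball x t)).toReal + (μ (ball x (dist x y))).toReal)⁻¹ *
        (t / (t + dist x y)) ^ δ₂ * (ρ x / (t + ρ x)) ^ δ₃) :
    ∃ C' > 0, ∀ (a : X → ℝ) (y₀ : X) (r : ℝ), 0 < r → r < ρ y₀ →
      MemLp a 2 μ →
      (∀ x, x ∉ ball y₀ r → a x = 0) →
      eLpNorm a 2 μ ≤ μ (ball y₀ r) ^ (-(1 : ℝ) / 2) →
      (r < ρ y₀ / 4 → ∫ x, a x ∂μ = 0) →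
      ∫⁻ x in (ball y₀ (4 * ρ y₀))ᶜ,
        ⨆ (t : ℝ) (_ : ρ x ≤ t), ENNReal.ofReal |∫ y, Tt t x y * a y ∂μ| ∂μ ≤
        ENNReal.ofReal C' :=
  maximal_large_time_atom_bound_general μ hballs hdouble ρ C₃ k₀ hρ hC₃ hk₀ hadm Tt CT δ₂ δ₃ hCT hδ₂
    hδ₃ hsize
end
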